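/- Let Δ = Δ_0 + Δ_1 + ⋯ + Δ_k be a Minkowski sum decomposition of a reflexive polytope Δ ⊂ ℝ^d into lattice polytopes. Let σ = {(tΔ, t) : t ≥ 0} ⊂ ℝ^d ⊕ ℝ with dual cone σ∨ ⊂ ℝ^d ⊕ ℝ, and let σ̄ ⊂ ℝ^d ⊕ ℝ^{k+1} be the Cayley cone with dual σ̄∨. The additive monoid homomorphism p : ℤ^d ⊕ ℤ^{k+1} → ℤ^d ⊕ ℤ, (n, α_0, …, α_k) ↦ (n, α_0 + ⋯ + α_k), maps σ̄∨ ∩ (ℤ^d ⊕ ℤ^{k+1}) into σ∨ ∩ (ℤ^d ⊕ ℤ), inducing a ℂ-algebra homomorphism φ : ℂ[σ̄∨ ∩ (ℤ^d ⊕ ℤ^{k+1})] → ℂ[σ∨ ∩ (ℤ^d ⊕ ℤ)] of monoid algebras with φ(χ^y) = χ^{p(y)}. Given arbitrary a_n ∈ ℂ for n ∈ Δ* ∩ ℤ^d, set f = Σ_{n ∈ Δ* ∩ ℤ^d} a_n χ^{(n,1)} and f̄ = a_0 χ^{r_0*} + Σ_{n ∈ (Δ* ∩ ℤ^d)∖{0}}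 a_n χ^{n − Σ_{j=0}^k min⟨Δ_j, n⟩ r_j*} (all exponents of f̄ lie in σ̄∨ ∩ (ℤ^d ⊕ ℤ^{k+1})). Then the kernel of the composite ring homomorphism ℂ[σ̄∨ ∩ (ℤ^d ⊕ ℤ^{k+1})] → ℂ[σ∨ ∩ (ℤ^d ⊕ ℤ)] → ℂ[σ∨ ∩ (ℤ^d ⊕ ℤ)]/(f) is the ideal generated by f̄ and the elements χ^{r_i*} − χ^{r_0*} for i = 1,…,k. -/

import Mathlib

open scoped Pointwise
open Set


noncomputable section

/-- The standard pairing on `ℝ^n`. -/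
def pairing {n : ℕ} (x y : Fin n → ℝ) : ℝ := ∑ i, x i * y i

/-- A point of `ℝ^n` lying in the lattice `ℤ^n`. -/
def IsLatticePt {n : ℕ} (x : Fin n → ℝ) : Prop := ∀ i, ∃ z : ℤ, x i = (z : ℝ)

/-- A lattice polytope: the convex hull of finitely many lattice points. -/
def IsLatticePolytope {n : ℕ} (P : Set (Fin n → ℝ)) : Prop :=
  ∃ S : Set (Fin n → ℝ), S.Finite ∧ (∀ x ∈ S, IsLatticePt x) ∧ P = convexHull ℝ S

/-- The dual polytope `P* = {y | ⟨x,y⟩ ≥ -1 ∀ x ∈ P}`. -/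
def polarDual {n : ℕ} (P : Set (Fin n → ℝ)) : Set (Fin n → ℝ) :=
  {y | ∀ x ∈ P, -1 ≤ pairing x y}

/-- A reflexive polytope. -/
def IsReflexive {n : ℕ} (P : Set (Fin n → ℝ)) : Prop :=
  IsLatticePolytope P ∧ (0 : Fin n → ℝ) ∈ interior P ∧ IsLatticePolytope (polarDual P)

/-- `min⟨P, u⟩ = min_{x ∈ P} ⟨x, u⟩`. -/
def minPair {n : ℕ} (P : Set (Fin n → ℝ)) (u : Fin n → ℝ) : ℝ :=
  sInf ((fun x => pairing x u) '' P)

/-- The real vector space `ℝ^d ⊕ ℝ^k`. -/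
abbrev Vdk (d k : ℕ) := (Fin d → ℝ) × (Fin k → ℝ)

/-- The pairing on `ℝ^d ⊕ ℝ^k` (sum of the two standard pairings). -/
def pairingV {d k : ℕ} (x y : Vdk d k) : ℝ := pairing x.1 y.1 + pairing x.2 y.2

def IsLatticePtV {d k : ℕ} (x : Vdk d k) : Prop := IsLatticePt x.1 ∧ IsLatticePt x.2

def IsLatticePolytopeV {d k : ℕ} (P : Set (Vdk d k)) : Prop :=
  ∃ S : Set (Vdk d k), S.Finite ∧ (∀ x ∈ S, IsLatticePtV x) ∧ P = convexHull ℝ S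

def polarDualV {d k : ℕ} (P : Set (Vdk d k)) : Set (Vdk d k) :=
  {y | ∀ x ∈ P, -1 ≤ pairingV x y}

def IsReflexiveV {d k : ℕ} (P : Set (Vdk d k)) : Prop :=
  IsLatticePolytopeV P ∧ (0 : Vdk d k) ∈ interior P ∧ IsLatticePolytopeV (polarDualV P)

/-- The Cayley cone `σ̄ = {(t₀Δ₀ + ⋯ + t_kΔ_k, t₀, …, t_k) : tᵢ ≥ 0} ⊆ ℝ^d ⊕ ℝ^{k+1}`. -/
def cayleyCone {d k : ℕ} (Δ : Fin (k+1) → Set (Fin d → ℝ)) : Set (Vdk d (k+1)) :=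
  {p | (∀ i, 0 ≤ p.2 i) ∧ p.1 ∈ ∑ i, p.2 i • Δ i}

/-- The dual cone of a cone in `ℝ^d ⊕ ℝ^k`. -/
def dualConeV {d k : ℕ} (σ : Set (Vdk d k)) : Set (Vdk d k) :=
  {y | ∀ x ∈ σ, 0 ≤ pairingV x y}

/-- The lattice `ℤ^d ⊕ ℤ^{k+1}` (dual lattice `N̄` of the Cayley construction). -/
abbrev Lbar (d k : ℕ) := (Fin d → ℤ) × (Fin (k+1) → ℤ)

/-- The lattice `ℤ^d ⊕ ℤ`. -/
abbrev Lsig (d : ℕ) := (Fin d → ℤ) × ℤ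

/-- Realification `ℤ^d ⊕ ℤ^{k+1} → ℝ^d ⊕ ℝ^{k+1}`. -/
def toR {d k : ℕ} (y : Lbar d k) : Vdk d (k+1) :=
  (fun j => (y.1 j : ℝ), fun i => (y.2 i : ℝ))

/-- Realification `ℤ^d ⊕ ℤ → ℝ^d ⊕ ℝ`. -/
def toRS {d : ℕ} (y : Lsig d) : (Fin d → ℝ) × ℝ :=
  (fun j => (y.1 j : ℝ), (y.2 : ℝ))

/-- The cone `σ = {(tP, t) : t ≥ 0} ⊆ ℝ^d ⊕ ℝ` over a polytope `P`. -/
def coneOver {d : ℕ} (P : Set (Fin d → ℝ)) : Set ((Fin d → ℝ) × ℝ) :=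
  {p | 0 ≤ p.2 ∧ p.1 ∈ p.2 • P}

/-- The dual cone of a cone in `ℝ^d ⊕ ℝ`. -/
def dualConeS {d : ℕ} (σ : Set ((Fin d → ℝ) × ℝ)) : Set ((Fin d → ℝ) × ℝ) :=
  {y | ∀ x ∈ σ, 0 ≤ pairing x.1 y.1 + x.2 * y.2}

/-- The additive monoid `σ̄∨ ∩ (ℤ^d ⊕ ℤ^{k+1})`. -/
def Sbar {d k : ℕ} (Δ : Fin (k+1) → Set (Fin d → ℝ)) : AddSubmonoid (Lbar d k) where
  carrier := {y | toR y ∈ dualConeV (cayleyCone Δ)}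
  zero_mem' := by
    intro x hx
    simp [toR, pairingV, pairing]
  add_mem' := by
    intro a b ha hb x hx
    have Ha := ha x hx
    have Hb := hb x hx
    simp only [toR, pairingV, pairing, Prod.fst_add, Prod.snd_add, Pi.add_apply,
      Int.cast_add, mul_add, Finset.sum_add_distrib] at Ha Hb ⊢
    linarith
/-- The additive monoid `σ∨ ∩ (ℤ^d ⊕ ℤ)`. -/
def Ssig {d : ℕ} (P : Set (Fin d → ℝ)) : AddSubmonoid (Lsig d) where
  carrier := {y | toRS y ∈ dualConeS (coneOver P)}
  zero_mem' := by
    intro x hx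
    simp [toRS, pairing]
  add_mem' := by
    intro a b ha hb x hx
    have Ha := ha x hx
    have Hb := hb x hx
    simp only [toRS, pairing, Prod.fst_add, Prod.snd_add, Pi.add_apply,
      Int.cast_add, mul_add, Finset.sum_add_distrib] at Ha Hb ⊢
    linarith

/-- The lattice projection `p : ℤ^d ⊕ ℤ^{k+1} → ℤ^d ⊕ ℤ`,
`(n, α₀, …, α_k) ↦ (n, α₀ + ⋯ + α_k)`. -/
def pL {d k : ℕ} : Lbar d k →+ Lsig d :=
  AddMonoidHom.mk' (fun y => (y.1, ∑ i, y.2 i)) (by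
    intro a b
    ext <;> simp [Finset.sum_add_distrib])

/-- `χ^x ∈ ℂ[S]` for `x ∈ S` (and `0` if `x ∉ S`). -/
def chi {A : Type*} [AddCommMonoid A] (S : AddSubmonoid A) (x : A) :
    AddMonoidAlgebra ℂ S :=
  letI := Classical.dec (x ∈ S)
  if h : x ∈ S then AddMonoidAlgebra.single (⟨x, h⟩ : S) 1 else 0

/-!
Write `μⱼ(n) = min⟨Δⱼ, n⟩`. A lattice point `(n, α)` lies in `σ̄∨` iff `αⱼ ≥ -μⱼ(n)` for all `j`,
and `(n, m)` lies in `σ∨` iff `m ≥ -min⟨Δ, n⟩ = -Σⱼ μⱼ(n)`. Hence every lattice point of `σ̄∨` over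
`(n, m)` is `(n, -μ(n)) + Σⱼ cⱼ rⱼ*` with `cⱼ ∈ ℕ` and `Σⱼ cⱼ = m + Σⱼ μⱼ(n)`: `p` is onto, and
modulo `J = (χ^{rᵢ*} - χ^{r₀*})` all monomials of a fibre of `p` agree, so `ker φ = J`. Since `0` is
interior to the reflexive `Δ`, `Σⱼ μⱼ(n) = min⟨Δ, n⟩ = -1` for `0 ≠ n ∈ Δ*`, whence `φ(f̄) = f`, and
the kernel in question is `φ⁻¹((φ f̄)) = (f̄) + ker φ`.
-/

open Filter Topology

lemma pairing_eq_dotProduct {n : ℕ} (x y : Fin n → ℝ) : pairing x y = x ⬝ᵥ y := rfl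

lemma IsLatticePolytope.isCompact {n : ℕ} {P : Set (Fin n → ℝ)} (hP : IsLatticePolytope P) :
    IsCompact P := by
  obtain ⟨S, hS, -, rfl⟩ := hP
  exact hS.isCompact_convexHull ℝ

lemma finite_setOf_intCast_mem {n : ℕ} {K : Set (Fin n → ℝ)} (hK : Bornology.IsBounded K) :
    {v : Fin n → ℤ | (fun i => (v i : ℝ)) ∈ K}.Finite := by
  have hiso : Isometry (fun (v : Fin n → ℤ) i => (v i : ℝ)) :=
    Isometry.piMap (fun _ => ((↑) : ℤ → ℝ)) fun _ => Real.isometry_intCast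
  exact (Metric.isCompact_of_isClosed_isBounded (isClosed_discrete _)
    (hiso.antilipschitz.isBounded_preimage hK)).finite_of_discrete

section minPair

variable {n : ℕ} {P : Set (Fin n → ℝ)} {u : Fin n → ℝ}

lemma minPair_le (hP : IsCompact P) {y : Fin n → ℝ} (hy : y ∈ P) : minPair P u ≤ pairing y u :=
  csInf_le (hP.image (continuous_id.dotProduct continuous_const)).bddBelow ⟨y, hy, rfl⟩

lemma le_minPair_iff (hP : IsCompact P) (hne : P.Nonempty) {c : ℝ} :
    c ≤ minPair P u ↔ ∀ y ∈ P, c ≤ pairing y u :=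
  ⟨fun h _ hy => h.trans (minPair_le hP hy),
    fun h => le_csInf (hne.image _) (by rintro _ ⟨y, hy, rfl⟩; exact h y hy)⟩

lemma exists_pairing_eq_minPair (hP : IsCompact P) (hne : P.Nonempty) (u : Fin n → ℝ) :
    ∃ y ∈ P, pairing y u = minPair P u := by
  obtain ⟨y, hy, hmin⟩ :=
    hP.exists_isMinOn hne (continuous_id.dotProduct continuous_const).continuousOn
  exact ⟨y, hy, le_antisymm ((le_minPair_iff hP hne).mpr fun z hz => hmin hz) (minPair_le hP hy)⟩

lemma minPair_zero (hne : P.Nonempty) : minPair P 0 = 0 := by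
  simp [minPair, pairing_eq_dotProduct, hne.image_const]

lemma minPair_neg_of_zero_mem_interior (hP : IsCompact P) (h0 : 0 ∈ interior P) (hu : u ≠ 0) :
    minPair P u < 0 := by
  have hpath : ∀ᶠ t : ℝ in 𝓝 0, (-t) • u ∈ P :=
    ((continuous_neg.smul continuous_const).tendsto' (0 : ℝ) 0 (by simp)).eventually
      (mem_interior_iff_mem_nhds.mp h0)
  obtain ⟨t, htP, ht⟩ := ((hpath.filter_mono nhdsWithin_le_nhds).and self_mem_nhdsWithin).exists
    (f := 𝓝[>] (0 : ℝ))
  have huu : 0 < u ⬝ᵥ u := by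
    simpa [star_trivial] using (Matrix.dotProduct_self_star_pos_iff (v := u)).mpr hu
  calc minPair P u ≤ pairing ((-t) • u) u := minPair_le hP htP
    _ = -(t * u ⬝ᵥ u) := by rw [pairing_eq_dotProduct, smul_dotProduct, smul_eq_mul, neg_mul]
    _ < 0 := neg_neg_iff_pos.mpr (mul_pos ht huu)

lemma minPair_finset_sum {ι : Type*} (s : Finset ι) {Q : ι → Set (Fin n → ℝ)}
    (hcpt : ∀ i, IsCompact (Q i)) (hne : ∀ i, (Q i).Nonempty) (u : Fin n → ℝ) :
    minPair (∑ i ∈ s, Q i) u = ∑ i ∈ s, minPair (Q i) u := by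
  have hlow : ∀ y ∈ ∑ i ∈ s, Q i, ∑ i ∈ s, minPair (Q i) u ≤ pairing y u := by
    intro y hy
    obtain ⟨g, hg, rfl⟩ := (Set.mem_finsetSum _ _ _).mp hy
    rw [pairing_eq_dotProduct, sum_dotProduct]
    exact Finset.sum_le_sum fun i hi => minPair_le (hcpt i) (hg hi)
  choose y hy hyu using fun i => exists_pairing_eq_minPair (hcpt i) (hne i) u
  have hsum : ∑ i ∈ s, y i ∈ ∑ i ∈ s, Q i := (Set.mem_finsetSum _ _ _).mpr ⟨y, fun _ => hy _, rfl⟩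
  refine le_antisymm ?_ (le_csInf ⟨_, _, hsum, rfl⟩ (by rintro _ ⟨z, hz, rfl⟩; exact hlow z hz))
  calc minPair (∑ i ∈ s, Q i) u ≤ pairing (∑ i ∈ s, y i) u :=
        csInf_le ⟨_, by rintro _ ⟨z, hz, rfl⟩; exact hlow z hz⟩ ⟨_, hsum, rfl⟩
    _ = ∑ i ∈ s, minPair (Q i) u := by
        rw [pairing_eq_dotProduct, sum_dotProduct]
        exact Finset.sum_congr rfl fun i _ => hyu i

end minPair

lemma mem_Ssig_iff {d : ℕ} {P : Set (Fin d → ℝ)} (hP : IsCompact P) (hne : P.Nonempty)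
    (n : Fin d → ℤ) (m : ℤ) :
    ((n, m) : Lsig d) ∈ Ssig P ↔ -(m : ℝ) ≤ minPair P (fun i => (n i : ℝ)) := by
  rw [le_minPair_iff hP hne]
  constructor
  · intro h y hy
    have := h (y, 1) ⟨zero_le_one, y, hy, one_smul ℝ y⟩
    simp only [toRS, one_mul] at this
    linarith
  · rintro h x ⟨ht, y, hy, hyx⟩
    simp only [← hyx, toRS, pairing_eq_dotProduct, smul_dotProduct, smul_eq_mul, ← mul_add]
    exact mul_nonneg ht (by linarith [h y hy, pairing_eq_dotProduct y (fun i => (n i : ℝ))])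

lemma mem_Sbar_iff {d k : ℕ} {Δ : Fin (k+1) → Set (Fin d → ℝ)} (hcpt : ∀ j, IsCompact (Δ j))
    (hne : ∀ j, (Δ j).Nonempty) (n : Fin d → ℤ) (α : Fin (k+1) → ℤ) :
    ((n, α) : Lbar d k) ∈ Sbar Δ ↔ ∀ j, -(α j : ℝ) ≤ minPair (Δ j) (fun i => (n i : ℝ)) := by
  simp only [le_minPair_iff (hcpt _) (hne _)]
  constructor
  · intro h j y hy
    have hsum : ∑ i, (Pi.single j 1 : Fin (k+1) → ℝ) i • Δ i = Δ j := by
      rw [Finset.sum_eq_single j (fun i _ hij => by simp [hij, zero_smul_set (hne i)]) (by simp)]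
      simp
    have hj := h (y, Pi.single j 1)
      ⟨fun i => by simp only [Pi.single_apply]; split <;> norm_num, hsum ▸ hy⟩
    simp only [pairingV, toR, pairing, Pi.single_apply, ite_mul, one_mul, zero_mul,
      Finset.sum_ite_eq', Finset.mem_univ, if_true] at hj
    simp only [pairing]
    linarith
  · rintro h ⟨x, t⟩ ⟨ht, hx⟩
    obtain ⟨g, hg, rfl⟩ := (Set.mem_finsetSum _ _ _).mp hx
    choose y hy hyg using fun i => Set.mem_smul_set.mp (hg (Finset.mem_univ i))
    have hpair : pairingV (∑ i, g i, t) (toR (n, α)) =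
        ∑ i, t i * (pairing (y i) (fun i => (n i : ℝ)) + α i) := by
      simp only [pairingV, toR, ← hyg, pairing_eq_dotProduct, sum_dotProduct, smul_dotProduct,
        smul_eq_mul, mul_add, Finset.sum_add_distrib]
      rfl
    rw [hpair]
    exact Finset.sum_nonneg fun i _ => mul_nonneg (ht i) (by linarith [h i (y i) (hy i)])

section mu

variable {d k : ℕ} {Δ : Fin (k+1) → Set (Fin d → ℝ)} {μ : (Fin d → ℤ) → Fin (k+1) → ℤ}
  (hcpt : ∀ j, IsCompact (Δ j)) (hne : ∀ j, (Δ j).Nonempty)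
  (hμ : ∀ n j, (μ n j : ℝ) = minPair (Δ j) (fun i => (n i : ℝ)))
include hcpt hne hμ

lemma mem_Sbar_iff_mu (n : Fin d → ℤ) (α : Fin (k+1) → ℤ) :
    ((n, α) : Lbar d k) ∈ Sbar Δ ↔ ∀ j, -μ n j ≤ α j := by
  simp only [mem_Sbar_iff hcpt hne, ← hμ, neg_le]
  exact forall_congr' fun j => by norm_cast

lemma sum_mu_eq_minPair (n : Fin d → ℤ) :
    ((∑ j, μ n j : ℤ) : ℝ) = minPair (∑ j, Δ j) (fun i => (n i : ℝ)) := by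
  rw [minPair_finset_sum _ hcpt hne]
  push_cast
  exact Finset.sum_congr rfl fun j _ => hμ n j

lemma mem_Ssig_sum_iff_mu (hP : IsCompact (∑ j, Δ j)) (n : Fin d → ℤ) (m : ℤ) :
    ((n, m) : Lsig d) ∈ Ssig (∑ j, Δ j) ↔ -∑ j, μ n j ≤ m := by
  have hPne : (∑ j, Δ j).Nonempty := by
    choose y hy using hne
    exact ⟨∑ j, y j, (Set.mem_finsetSum _ _ _).mpr ⟨y, fun _ => hy _, rfl⟩⟩
  rw [mem_Ssig_iff hP hPne, ← sum_mu_eq_minPair hcpt hne hμ, neg_le]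
  norm_cast

omit hcpt in
lemma mu_zero (j : Fin (k+1)) : μ 0 j = 0 := by
  have h := hμ 0 j
  rw [show (fun i => ((0 : Fin d → ℤ) i : ℝ)) = 0 from funext fun _ => Int.cast_zero,
    minPair_zero (hne j)] at h
  exact_mod_cast h

lemma sum_mu_eq_neg_one (hP : IsCompact (∑ j, Δ j)) (h0 : 0 ∈ interior (∑ j, Δ j))
    {n : Fin d → ℤ} (hn : (fun i => (n i : ℝ)) ∈ polarDual (∑ j, Δ j)) (hn0 : n ≠ 0) :
    ∑ j, μ n j = -1 := by
  have hcast : (fun i => (n i : ℝ)) ≠ 0 := fun h =>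
    hn0 (funext fun i => by simpa using congrFun h i)
  have hlt := sum_mu_eq_minPair hcpt hne hμ n ▸ minPair_neg_of_zero_mem_interior hP h0 hcast
  have hge : (-1 : ℝ) ≤ ((∑ j, μ n j : ℤ) : ℝ) := by
    rw [sum_mu_eq_minPair hcpt hne hμ, le_minPair_iff hP ⟨0, interior_subset h0⟩]
    exact hn
  have : -1 ≤ ∑ j, μ n j ∧ ∑ j, μ n j < 0 := ⟨by exact_mod_cast hge, by exact_mod_cast hlt⟩
  omega

end mu

namespace AddMonoidAlgebra

open Function

variable {R A B : Type*} [Ring R] [AddMonoid A] [AddMonoid B] {p : A →+ B} (hp : Surjective p)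
  {φ : R[A] →+* R[B]} (hφ : ∀ a c, φ (single a c) = single (p a) c)
include hp hφ

lemma map_mapDomain_surjInv (h : R[B]) : φ (mapDomain (surjInv hp) h) = h := by
  induction h using induction_linear with
  | zero => simp
  | add x y hx hy => rw [mapDomain_add, map_add, hx, hy]
  | single b c => rw [mapDomain_single, hφ, surjInv_eq hp]

lemma surjective_of_map_single : Surjective φ :=
  fun h => ⟨_, map_mapDomain_surjInv hp hφ h⟩

variable {J : Ideal R[A]} (hfib : ∀ a a', p a = p a' → single a 1 - single a' 1 ∈ J)
include hfib

lemma sub_mapDomain_surjInv_mem (g : R[A]) : g - mapDomain (surjInv hp) (φ g) ∈ J := by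
  induction g using induction_linear with
  | zero => simp
  | add x y hx hy =>
    rw [map_add, mapDomain_add, add_sub_add_comm]
    exact add_mem hx hy
  | single a c =>
    rw [hφ, mapDomain_single]
    have := J.mul_mem_left (single 0 c) (hfib a _ (surjInv_eq hp (p a)).symm)
    rwa [mul_sub, single_mul_single, single_mul_single, zero_add, zero_add, mul_one] at this

theorem ker_eq_of_fiber_sub_mem (hJ : J ≤ RingHom.ker φ) : RingHom.ker φ = J := by
  refine le_antisymm (fun g hg => ?_) hJ
  simpa [(RingHom.mem_ker).mp hg] using sub_mapDomain_surjInv_mem hp hφ hfib g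

end AddMonoidAlgebra

theorem RingHom.ker_comp_mk_span_singleton {R S : Type*} [CommRing R] [CommRing S] {φ : R →+* S}
    (hφ : Function.Surjective φ) (g : R) :
    RingHom.ker ((Ideal.Quotient.mk (Ideal.span {φ g})).comp φ) =
      Ideal.span {g} ⊔ RingHom.ker φ := by
  rw [← RingHom.comap_ker, Ideal.mk_ker, ← Set.image_singleton, ← Ideal.map_span,
    Ideal.comap_map_of_surjective' φ hφ]

section chi

variable {A : Type*} [AddCommMonoid A] {S : AddSubmonoid A} {x y : A}

lemma chi_of_mem (h : x ∈ S) : chi S x = AddMonoidAlgebra.single ⟨x, h⟩ 1 := dif_pos h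

lemma smul_chi_of_mem (h : x ∈ S) (c : ℂ) : c • chi S x = AddMonoidAlgebra.single ⟨x, h⟩ c := by
  rw [chi_of_mem h, AddMonoidAlgebra.smul_single', mul_one]

lemma chi_zero : chi S 0 = 1 := chi_of_mem S.zero_mem

lemma chi_add (hx : x ∈ S) (hy : y ∈ S) : chi S (x + y) = chi S x * chi S y := by
  rw [chi_of_mem hx, chi_of_mem hy, chi_of_mem (S.add_mem hx hy),
    AddMonoidAlgebra.single_mul_single, mul_one]
  rfl

lemma chi_nsmul (hx : x ∈ S) (m : ℕ) : chi S (m • x) = chi S x ^ m := by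
  induction m with
  | zero => rw [zero_smul, pow_zero, chi_zero]
  | succ m ih => rw [succ_nsmul, chi_add (S.nsmul_mem hx m) hx, ih, pow_succ]

lemma chi_sum {ι : Type*} (s : Finset ι) {x : ι → A} (h : ∀ i ∈ s, x i ∈ S) :
    chi S (∑ i ∈ s, x i) = ∏ i ∈ s, chi S (x i) := by
  classical
  induction s using Finset.induction_on with
  | empty => exact chi_zero
  | insert i s hi ih =>
    rw [Finset.sum_insert hi, Finset.prod_insert hi,
      chi_add (h i (s.mem_insert_self i)) (S.sum_mem fun j hj => h j (Finset.mem_insert_of_mem hj)),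
      ih fun j hj => h j (Finset.mem_insert_of_mem hj)]

end chi

section Cayley

variable {d k : ℕ} {Δ : Fin (k+1) → Set (Fin d → ℝ)} {μ : (Fin d → ℤ) → Fin (k+1) → ℤ}

def diffIdeal (Δ : Fin (k+1) → Set (Fin d → ℝ)) : Ideal (AddMonoidAlgebra ℂ (Sbar Δ)) :=
  Ideal.span (⋃ i : Fin k, {chi (Sbar Δ) ((0 : Fin d → ℤ), Pi.single i.succ 1) -
    chi (Sbar Δ) ((0 : Fin d → ℤ), Pi.single 0 1)})

lemma mk_chi_single (i : Fin (k+1)) :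
    Ideal.Quotient.mk (diffIdeal Δ) (chi (Sbar Δ) ((0 : Fin d → ℤ), Pi.single i 1)) =
      Ideal.Quotient.mk (diffIdeal Δ) (chi (Sbar Δ) ((0 : Fin d → ℤ), Pi.single 0 1)) := by
  induction i using Fin.cases with
  | zero => rfl
  | succ i => exact Ideal.Quotient.eq.mpr (Ideal.subset_span (Set.mem_iUnion.mpr ⟨i, rfl⟩))

lemma pL_apply (y : Lbar d k) : pL y = (y.1, ∑ j, y.2 j) := rfl

lemma pL_single (i : Fin (k+1)) : pL (((0 : Fin d → ℤ), Pi.single i 1) : Lbar d k) = (0, 1) := by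
  simp [pL_apply]

lemma eq_add_sum_nsmul_single {n : Fin d → ℤ} {α : Fin (k+1) → ℤ} (hα : ∀ j, -μ n j ≤ α j) :
    ((n, α) : Lbar d k) = (n, fun j => -μ n j) +
      ∑ j, (α j + μ n j).toNat • ((0 : Fin d → ℤ), Pi.single j 1) := by
  ext t
  · simp [Prod.fst_sum]
  · have hc : 0 ≤ α t + μ n t := by linarith [hα t]
    simp [Prod.snd_sum, Finset.sum_apply, Pi.single_apply, max_eq_left hc]

variable (hSbar : ∀ n α, ((n, α) : Lbar d k) ∈ Sbar Δ ↔ ∀ j, -μ n j ≤ α j)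
  (hμ0 : ∀ j, μ 0 j = 0)
include hSbar hμ0

omit hμ0 in
lemma base_mem_Sbar (n : Fin d → ℤ) : ((n, fun j => -μ n j) : Lbar d k) ∈ Sbar Δ :=
  (hSbar _ _).mpr fun _ => le_rfl

lemma single_mem_Sbar (i : Fin (k+1)) :
    (((0 : Fin d → ℤ), Pi.single i 1) : Lbar d k) ∈ Sbar Δ :=
  (hSbar _ _).mpr fun j => by rw [hμ0, neg_zero, Pi.single_apply]; split <;> norm_num

lemma mk_chi_eq_mul_pow {n : Fin d → ℤ} {α : Fin (k+1) → ℤ} (hα : ∀ j, -μ n j ≤ α j) :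
    Ideal.Quotient.mk (diffIdeal Δ) (chi (Sbar Δ) (n, α)) =
      Ideal.Quotient.mk (diffIdeal Δ) (chi (Sbar Δ) (n, fun j => -μ n j)) *
        Ideal.Quotient.mk (diffIdeal Δ) (chi (Sbar Δ) ((0 : Fin d → ℤ), Pi.single 0 1)) ^
          ∑ j, (α j + μ n j).toNat := by
  have he := single_mem_Sbar hSbar hμ0
  rw [eq_add_sum_nsmul_single hα, chi_add (base_mem_Sbar hSbar n)
      ((Sbar Δ).sum_mem fun j _ => (Sbar Δ).nsmul_mem (he j) _),
    chi_sum _ fun j _ => (Sbar Δ).nsmul_mem (he j) _, map_mul, map_prod]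
  simp only [chi_nsmul (he _), map_pow, mk_chi_single, Finset.prod_pow_eq_pow_sum]

lemma mk_chi_eq_of_pL_eq {y z : Lbar d k} (hy : y ∈ Sbar Δ) (hz : z ∈ Sbar Δ)
    (h : pL y = pL z) :
    Ideal.Quotient.mk (diffIdeal Δ) (chi (Sbar Δ) y) =
      Ideal.Quotient.mk (diffIdeal Δ) (chi (Sbar Δ) z) := by
  obtain ⟨n, α⟩ := y
  obtain ⟨n', β⟩ := z
  obtain ⟨rfl, hsum⟩ := Prod.mk.inj (by simpa only [pL_apply] using h)
  have hα := (hSbar _ _).mp hy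
  have hβ := (hSbar _ _).mp hz
  have hexp : ∀ γ : Fin (k+1) → ℤ, (∀ j, -μ n j ≤ γ j) →
      ((∑ j, (γ j + μ n j).toNat : ℕ) : ℤ) = ∑ j, γ j + ∑ j, μ n j := by
    intro γ hγ
    push_cast
    rw [← Finset.sum_add_distrib]
    exact Finset.sum_congr rfl fun j _ => Int.toNat_of_nonneg (by linarith [hγ j])
  rw [mk_chi_eq_mul_pow hSbar hμ0 hα, mk_chi_eq_mul_pow hSbar hμ0 hβ]
  congr 2
  exact_mod_cast (hexp α hα).trans (hsum ▸ (hexp β hβ).symm)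

variable {Δtot : Set (Fin d → ℝ)} (hSsig : ∀ n m, ((n, m) : Lsig d) ∈ Ssig Δtot ↔ -∑ j, μ n j ≤ m)
  (hmap : ∀ y : Lbar d k, y ∈ Sbar Δ → pL y ∈ Ssig Δtot)
  {φ : AddMonoidAlgebra ℂ (Sbar Δ) →+* AddMonoidAlgebra ℂ (Ssig Δtot)}
  (hφ : ∀ (y : Sbar Δ) (c : ℂ), φ (AddMonoidAlgebra.single y c) =
    AddMonoidAlgebra.single (⟨pL (y : Lbar d k), hmap y y.2⟩ : Ssig Δtot) c)

include hSsig in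
lemma surjective_pL_codRestrict :
    Function.Surjective
      ((pL.comp (Sbar Δ).subtype).codRestrict (Ssig Δtot) fun y => hmap y y.2) := by
  rintro ⟨⟨n, m⟩, hs⟩
  have hc : 0 ≤ m + ∑ j, μ n j := by linarith [(hSsig n m).mp hs]
  refine ⟨⟨(n, fun j => -μ n j) + (m + ∑ j, μ n j).toNat • ((0 : Fin d → ℤ), Pi.single 0 1),
    add_mem (base_mem_Sbar hSbar n) (nsmul_mem (single_mem_Sbar hSbar hμ0 0) _)⟩, ?_⟩
  refine Subtype.ext ?_
  change pL ((n, fun j => -μ n j) + (m + ∑ j, μ n j).toNat • ((0 : Fin d → ℤ), Pi.single 0 1)) =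
    (n, m)
  rw [map_add, map_nsmul, pL_single, pL_apply]
  ext <;> simp [Int.toNat_of_nonneg hc]

include hSsig hφ in
lemma ker_eq_diffIdeal : RingHom.ker φ = diffIdeal Δ := by
  refine AddMonoidAlgebra.ker_eq_of_fiber_sub_mem (surjective_pL_codRestrict hSbar hμ0 hSsig hmap)
    hφ (fun y z h => Ideal.Quotient.eq.mp ?_) (Ideal.span_le.mpr ?_)
  · rw [← chi_of_mem y.2, ← chi_of_mem z.2]
    exact mk_chi_eq_of_pL_eq hSbar hμ0 y.2 z.2 (congrArg Subtype.val h)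
  · rintro _ ⟨_, ⟨i, rfl⟩, rfl⟩
    rw [SetLike.mem_coe, RingHom.mem_ker, map_sub, chi_of_mem (single_mem_Sbar hSbar hμ0 _),
      chi_of_mem (single_mem_Sbar hSbar hμ0 _), hφ, hφ, sub_eq_zero]
    congr 2
    simp only [pL_single]

omit hSbar hμ0 in
include hφ in
lemma map_smul_chi {y : Lbar d k} (hy : y ∈ Sbar Δ) (c : ℂ) :
    φ (c • chi (Sbar Δ) y) = c • chi (Ssig Δtot) (pL y) := by
  rw [smul_chi_of_mem hy, hφ, smul_chi_of_mem (hmap y hy)]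

include hφ in
lemma map_fbar_eq_f (a : (Fin d → ℤ) → ℂ) {s : Set (Fin d → ℤ)} (hs : s.Finite) (h0 : 0 ∈ s)
    (hsum : ∀ n ∈ s, n ≠ 0 → ∑ j, μ n j = -1) :
    φ (a 0 • chi (Sbar Δ) ((0 : Fin d → ℤ), Pi.single 0 1) +
        ∑ᶠ n ∈ {n | n ≠ 0 ∧ n ∈ s}, a n • chi (Sbar Δ) (n, fun j => -μ n j)) =
      ∑ᶠ n ∈ s, a n • chi (Ssig Δtot) (n, 1) := by
  have hs' : s = insert 0 {n | n ≠ 0 ∧ n ∈ s} := by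
    ext n
    by_cases hn : n = 0 <;> simp [hn, h0]
  have hfin : {n | n ≠ 0 ∧ n ∈ s}.Finite := hs.subset fun n hn => hn.2
  have hφsum := (φ : AddMonoidAlgebra ℂ (Sbar Δ) →+ AddMonoidAlgebra ℂ (Ssig Δtot)).map_finsum_mem
    (fun n => a n • chi (Sbar Δ) (n, fun j => -μ n j)) hfin
  simp only [AddMonoidHom.coe_coe] at hφsum
  rw [map_add, hφsum]
  conv_rhs => rw [hs', finsum_mem_insert _ (fun h => h.1 rfl) hfin]
  congr 1
  · rw [map_smul_chi hmap hφ (single_mem_Sbar hSbar hμ0 0), pL_single]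
  · refine finsum_mem_congr rfl fun n hn => ?_
    rw [map_smul_chi hmap hφ (base_mem_Sbar hSbar n), pL_apply]
    simp [Finset.sum_neg_distrib, hsum n hn.2 hn.1]

end Cayley

/-- the kernel of `ℂ[σ̄∨ ∩ N̄] → ℂ[σ∨ ∩ N]/(f)` is generated by `f̄` and
`χ^{rᵢ*} − χ^{r₀*}`, `i = 1, …, k`. -/
theorem kernel_generated_by_fbar_and_differences {d k : ℕ}
    (Δ : Fin (k+1) → Set (Fin d → ℝ))
    (hlat : ∀ i, IsLatticePolytope (Δ i))
    (Δtot : Set (Fin d → ℝ)) (hΔtot : Δtot = ∑ i, Δ i)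
    (hrefl : IsReflexive Δtot)
    -- p maps σ̄∨ ∩ (ℤ^d ⊕ ℤ^{k+1}) into σ∨ ∩ (ℤ^d ⊕ ℤ)
    (hmap : ∀ y : Lbar d k, y ∈ Sbar Δ → pL y ∈ Ssig Δtot)
    -- the induced ℂ-algebra homomorphism φ with φ(χ^y) = χ^{p(y)}
    (φ : AddMonoidAlgebra ℂ (Sbar Δ) →+* AddMonoidAlgebra ℂ (Ssig Δtot))
    (hφ : ∀ (y : Sbar Δ) (c : ℂ),
      φ (AddMonoidAlgebra.single y c) =
        AddMonoidAlgebra.single (⟨pL (y : Lbar d k), hmap y y.2⟩ : Ssig Δtot) c)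
    -- arbitrary coefficients a_n for n ∈ Δ* ∩ ℤ^d
    (a : (Fin d → ℤ) → ℂ)
    -- μ n j = min⟨Δⱼ, n⟩ (an integer)
    (μ : (Fin d → ℤ) → Fin (k+1) → ℤ)
    (hμ : ∀ n j, (μ n j : ℝ) = minPair (Δ j) (fun i => (n i : ℝ)))
    -- f = Σ_{n ∈ Δ* ∩ ℤ^d} a_n χ^{(n,1)}
    (f : AddMonoidAlgebra ℂ (Ssig Δtot))
    (hf : f = ∑ᶠ n ∈ {n : Fin d → ℤ | (fun i => (n i : ℝ)) ∈ polarDual Δtot},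
        a n • chi (Ssig Δtot) (n, 1))
    -- f̄ = a₀χ^{r₀*} + Σ_{0 ≠ n ∈ Δ* ∩ ℤ^d} a_n χ^{n − Σⱼ min⟨Δⱼ,n⟩rⱼ*}
    (fbar : AddMonoidAlgebra ℂ (Sbar Δ))
    (hfbar : fbar = a 0 • chi (Sbar Δ) (0, Pi.single 0 1) +
        ∑ᶠ n ∈ {n : Fin d → ℤ | n ≠ 0 ∧ (fun i => (n i : ℝ)) ∈ polarDual Δtot},
          a n • chi (Sbar Δ) (n, fun j => -μ n j)) :
    -- all relevant exponents lie in the corresponding cones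
    ((((0 : Fin d → ℤ), Pi.single 0 1) : Lbar d k) ∈ Sbar Δ) ∧
    (∀ i : Fin k, (((0 : Fin d → ℤ), Pi.single i.succ 1) : Lbar d k) ∈ Sbar Δ) ∧
    (∀ n : Fin d → ℤ, (fun i => (n i : ℝ)) ∈ polarDual Δtot →
      (((n, 1) : Lsig d) ∈ Ssig Δtot) ∧
        (n ≠ 0 → ((n, fun j => -μ n j) : Lbar d k) ∈ Sbar Δ)) ∧
    -- the kernel of the composite ℂ[σ̄∨ ∩ N̄] → ℂ[σ∨ ∩ N]/(f)
    RingHom.ker ((Ideal.Quotient.mk (Ideal.span {f})).comp φ) =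
      Ideal.span ({fbar} ∪
        ⋃ i : Fin k, {chi (Sbar Δ) ((0 : Fin d → ℤ), Pi.single i.succ 1) -
          chi (Sbar Δ) ((0 : Fin d → ℤ), Pi.single 0 1)}) := by
  subst hΔtot
  have hcpt : ∀ j, IsCompact (Δ j) := fun j => (hlat j).isCompact
  have hne : ∀ j, (Δ j).Nonempty := fun j => by
    obtain ⟨g, hg, -⟩ := (Set.mem_finsetSum _ _ _).mp (interior_subset hrefl.2.1)
    exact ⟨g j, hg (Finset.mem_univ j)⟩
  have hP : IsCompact (∑ j, Δ j) := hrefl.1.isCompact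
  have hSbar := mem_Sbar_iff_mu hcpt hne hμ
  have hSsig := mem_Ssig_sum_iff_mu hcpt hne hμ hP
  have hμ0 := mu_zero hne hμ
  have hsum : ∀ n ∈ {n : Fin d → ℤ | (fun i => (n i : ℝ)) ∈ polarDual (∑ j, Δ j)}, n ≠ 0 →
      ∑ j, μ n j = -1 :=
    fun n hn hn0 => sum_mu_eq_neg_one hcpt hne hμ hP hrefl.2.1 hn hn0
  have hφf : φ fbar = f := by
    rw [hfbar, hf]
    exact map_fbar_eq_f hSbar hμ0 hmap hφ a (finite_setOf_intCast_mem hrefl.2.2.isCompact.isBounded)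
      (fun x _ => by simp [pairing]) hsum
  refine ⟨single_mem_Sbar hSbar hμ0 0, fun i => single_mem_Sbar hSbar hμ0 i.succ,
    fun n hn => ⟨?_, fun _ => base_mem_Sbar hSbar n⟩, ?_⟩
  · have hPne : (∑ j, Δ j).Nonempty := ⟨0, interior_subset hrefl.2.1⟩
    rw [mem_Ssig_iff hP hPne, le_minPair_iff hP hPne, Int.cast_one]
    exact hn
  · rw [Ideal.span_union, ← hφf, RingHom.ker_comp_mk_span_singleton
      (AddMonoidAlgebra.surjective_of_map_single
        (surjective_pL_codRestrict hSbar hμ0 hSsig hmap) hφ),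
      ker_eq_diffIdeal hSbar hμ0 hSsig hmap hφ]
    rfl
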